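/- Let W, I, J be independent with W ~ Exp(α+β), I ~ Exp(α), J ~ Exp(β). Define I' = W + (I − J)^+, J' = W + (I − J)^−, W' = min(I, J). Then the triple (I', J', W') has the same joint distribution as (I, J, W). -/

import Mathlib

/-!
The map `(x, y, z) ↦ (z + (x - y)⁺, z + (x - y)⁻, min x y)` preserves Lebesgue measure on `ℝ³`:
conjugated by the shear `(x, y, z) ↦ (x - y, y, z)` it becomes `(d, y, z) ↦ (d, z + d⁻, y - d⁻)`,
which for each fixed `d` is a swap of coordinates followed by a translation. It also preserves the
joint density `α β (α + β) exp (-(α x + β y + (α + β) z))` of `(I, J, W)` on the positive octant,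
since it preserves the octant and the linear form `α x + β y + (α + β) z`. Pushing forward a
measure with density along a map preserving both the reference measure and the density changes
nothing.
-/

open MeasureTheory ProbabilityTheory Real
open scoped ENNReal

namespace MeasureTheory

variable {X Y : Type*} [MeasurableSpace X] [MeasurableSpace Y]

theorem MeasurePreserving.map_withDensity_comp {μ : Measure X} {ν : Measure Y} {f : X → Y}
    (hf : MeasurePreserving f μ ν) {g : Y → ℝ≥0∞} (hg : Measurable g) :
    (μ.withDensity (g ∘ f)).map f = ν.withDensity g := by
  ext s hs
  rw [Measure.map_apply hf.measurable hs, withDensity_apply _ (hf.measurable hs),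
    withDensity_apply _ hs, ← hf.setLIntegral_comp_preimage hs hg]
  rfl

theorem measurePreserving_add_fst_prod {G : Type*} [MeasurableSpace G] [AddGroup G]
    [MeasurableAdd₂ G] (μ : Measure G) [μ.IsAddRightInvariant] [SFinite μ]
    (ν : Measure Y) [SFinite ν] {φ : Y → G} (hφ : Measurable φ) :
    MeasurePreserving (fun p : G × Y => (p.1 + φ p.2, p.2)) (μ.prod ν) (μ.prod ν) :=
  (Measure.measurePreserving_swap.comp
    ((MeasurePreserving.id ν).skew_product (g := fun y x => x + φ y)
      (measurable_snd.add (hφ.comp measurable_fst))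
      (ae_of_all _ fun y => map_add_right_eq_self μ (φ y)))).comp
    Measure.measurePreserving_swap

end MeasureTheory

def tripleInvolution (p : ℝ × ℝ × ℝ) : ℝ × ℝ × ℝ :=
  (p.2.2 + max (p.1 - p.2.1) 0, p.2.2 + max (p.2.1 - p.1) 0, min p.1 p.2.1)

theorem tripleInvolution_eq_conj_shear :
    tripleInvolution =
      (fun p : ℝ × ℝ × ℝ => (p.1 + p.2.1, p.2)) ∘
      (fun p : ℝ × ℝ × ℝ => (p.1, p.2.2 + max (-p.1) 0, p.2.1 - max (-p.1) 0)) ∘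
      (fun p : ℝ × ℝ × ℝ => (p.1 + -p.2.1, p.2)) := by
  funext ⟨x, y, z⟩
  simp only [tripleInvolution, Function.comp_apply, Prod.mk.injEq]
  grind

theorem measurePreserving_tripleInvolution :
    MeasurePreserving tripleInvolution volume volume := by
  have shear {φ : ℝ × ℝ → ℝ} (hφ : Measurable φ) :
      MeasurePreserving (fun p : ℝ × ℝ × ℝ => (p.1 + φ p.2, p.2)) volume volume :=
    Measure.volume_eq_prod (α := ℝ) (β := ℝ × ℝ) ▸
      measurePreserving_add_fst_prod volume volume hφ
  have swap_translate (c : ℝ) :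
      (volume.prod volume).map (fun q : ℝ × ℝ => (q.2 + c, q.1 - c)) = volume.prod volume :=
    (((measurePreserving_add_right volume c).prod (measurePreserving_sub_right volume c)).comp
      Measure.measurePreserving_swap).map_eq
  have fiberwise : MeasurePreserving
      (fun p : ℝ × ℝ × ℝ => (p.1, p.2.2 + max (-p.1) 0, p.2.1 - max (-p.1) 0)) volume volume := by
    rw [Measure.volume_eq_prod (α := ℝ) (β := ℝ × ℝ)]
    exact (MeasurePreserving.id volume).skew_product (by fun_prop)
      (ae_of_all _ fun d => swap_translate (max (-d) 0))
  rw [tripleInvolution_eq_conj_shear]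
  exact (shear measurable_fst).comp (fiberwise.comp (shear measurable_fst.neg))

theorem expMeasure_eq_withDensity (r : ℝ) :
    expMeasure r = volume.withDensity (exponentialPDF r) := rfl

@[fun_prop]
theorem measurable_exponentialPDF (r : ℝ) : Measurable (exponentialPDF r) :=
  (measurable_exponentialPDFReal r).ennreal_ofReal

noncomputable def expProdDensity (a b c : ℝ) (p : ℝ × ℝ × ℝ) : ℝ≥0∞ :=
  exponentialPDF a p.1 * (exponentialPDF b p.2.1 * exponentialPDF c p.2.2)

theorem expMeasure_prod_prod (a b c : ℝ) :
    (expMeasure a).prod ((expMeasure b).prod (expMeasure c))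
      = volume.withDensity (expProdDensity a b c) := by
  simp only [expMeasure_eq_withDensity]
  rw [prod_withDensity (measurable_exponentialPDF b) (measurable_exponentialPDF c),
    prod_withDensity (measurable_exponentialPDF a) (by fun_prop), ← Measure.volume_eq_prod,
    ← Measure.volume_eq_prod]
  rfl

theorem expProdDensity_eq {a b : ℝ} (ha : 0 ≤ a) (hb : 0 ≤ b) (c : ℝ) (p : ℝ × ℝ × ℝ) :
    expProdDensity a b c p = if 0 ≤ p.1 ∧ 0 ≤ p.2.1 ∧ 0 ≤ p.2.2 then
      ENNReal.ofReal (a * b * c * exp (-(a * p.1 + b * p.2.1 + c * p.2.2))) else 0 := by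
  obtain ⟨x, y, z⟩ := p
  by_cases hp : 0 ≤ x ∧ 0 ≤ y ∧ 0 ≤ z
  · obtain ⟨hx, hy, hz⟩ := hp
    rw [if_pos ⟨hx, hy, hz⟩, expProdDensity, exponentialPDF_of_nonneg hx,
      exponentialPDF_of_nonneg hy, exponentialPDF_of_nonneg hz,
      ← ENNReal.ofReal_mul (by positivity), ← ENNReal.ofReal_mul (by positivity)]
    congr 1
    rw [neg_add, neg_add, exp_add, exp_add]
    ring
  · rw [if_neg hp]
    simp only [not_and_or, not_le] at hp
    rcases hp with h | h | h <;> simp [expProdDensity, exponentialPDF_of_neg h]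

theorem expProdDensity_tripleInvolution {α β : ℝ} (hα : 0 ≤ α) (hβ : 0 ≤ β) (p : ℝ × ℝ × ℝ) :
    expProdDensity α β (α + β) (tripleInvolution p) = expProdDensity α β (α + β) p := by
  obtain ⟨x, y, z⟩ := p
  have support : (0 ≤ z + max (x - y) 0 ∧ 0 ≤ z + max (y - x) 0 ∧ 0 ≤ min x y)
      ↔ (0 ≤ x ∧ 0 ≤ y ∧ 0 ≤ z) := by
    grind
  have exponent : α * (z + max (x - y) 0) + β * (z + max (y - x) 0) + (α + β) * min x y
      = α * x + β * y + (α + β) * z := by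
    rcases le_total x y with h | h
    · rw [max_eq_right (by linarith), max_eq_left (by linarith), min_eq_left h]; ring
    · rw [max_eq_left (by linarith), max_eq_right (by linarith), min_eq_right h]; ring
  simp only [expProdDensity_eq hα hβ, tripleInvolution, support, exponent]

theorem map_tripleInvolution_expMeasure_prod {α β : ℝ} (hα : 0 ≤ α) (hβ : 0 ≤ β) :
    ((expMeasure α).prod ((expMeasure β).prod (expMeasure (α + β)))).map tripleInvolution
      = (expMeasure α).prod ((expMeasure β).prod (expMeasure (α + β))) := by
  have hP : Measurable (expProdDensity α β (α + β)) := by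
    unfold expProdDensity; fun_prop
  have hinv : expProdDensity α β (α + β) ∘ tripleInvolution = expProdDensity α β (α + β) :=
    funext (expProdDensity_tripleInvolution hα hβ)
  rw [expMeasure_prod_prod]
  nth_rw 1 [← hinv]
  exact measurePreserving_tripleInvolution.map_withDensity_comp hP

theorem ProbabilityTheory.iIndepFun.map_prodMk_prodMk_eq_prod {ι Ω : Type*} [MeasurableSpace Ω]
    {μ : Measure Ω} {β : ι → Type*} [∀ i, MeasurableSpace (β i)] {f : ∀ i, Ω → β i}
    (h : iIndepFun f μ) (hf : ∀ i, Measurable (f i)) {i j k : ι}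
    (hij : i ≠ j) (hik : i ≠ k) (hjk : j ≠ k) :
    μ.map (fun ω => (f i ω, f j ω, f k ω))
      = (μ.map (f i)).prod ((μ.map (f j)).prod (μ.map (f k))) := by
  have := h.isProbabilityMeasure
  rw [(indepFun_iff_map_prod_eq_prod_map_map (hf i).aemeasurable
      ((hf j).prodMk (hf k)).aemeasurable).mp (h.indepFun_prodMk hf j k i hij.symm hik.symm).symm,
    (indepFun_iff_map_prod_eq_prod_map_map (hf j).aemeasurable (hf k).aemeasurable).mp
      (h.indepFun hjk)]

theorem exp_triple_involution_dist_general {Ω : Type*} [MeasurableSpace Ω] (μ : Measure Ω)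
    {W I J : Ω → ℝ}
    (hW : Measurable W) (hI : Measurable I) (hJ : Measurable J)
    {α β : ℝ} (hα : 0 < α) (hβ : 0 < β)
    (hindep : iIndepFun ![W, I, J] μ)
    (hWd : μ.map W = expMeasure (α + β))
    (hId : μ.map I = expMeasure α) (hJd : μ.map J = expMeasure β) :
    μ.map (fun ω => (W ω + max (I ω - J ω) 0, W ω + max (J ω - I ω) 0, min (I ω) (J ω)))
      = μ.map (fun ω => (I ω, J ω, W ω)) := by
  have hmeas : ∀ i, Measurable (![W, I, J] i) := by
    intro i; fin_cases i <;> assumption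
  have hlaw : μ.map (fun ω => (I ω, J ω, W ω))
      = (expMeasure α).prod ((expMeasure β).prod (expMeasure (α + β))) := by
    rw [← hId, ← hJd, ← hWd]
    exact hindep.map_prodMk_prodMk_eq_prod hmeas (i := 1) (j := 2) (k := 0)
      (by decide) (by decide) (by decide)
  calc _ = (μ.map (fun ω => (I ω, J ω, W ω))).map tripleInvolution :=
        (Measure.map_map measurePreserving_tripleInvolution.measurable
          (hI.prodMk (hJ.prodMk hW))).symm
    _ = _ := by rw [hlaw, map_tripleInvolution_expMeasure_prod hα.le hβ.le]

/-- Let `W ~ Exp(α+β)`, `I ~ Exp(α)`, `J ~ Exp(β)` be independent. Then the triple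
`(I', J', W') = (W + (I-J)⁺, W + (I-J)⁻, min(I,J))` has the same distribution as `(I, J, W)`. -/
theorem exp_triple_involution_dist {Ω : Type*} [MeasurableSpace Ω] (μ : Measure Ω)
    [IsProbabilityMeasure μ] {W I J : Ω → ℝ}
    (hW : Measurable W) (hI : Measurable I) (hJ : Measurable J)
    {α β : ℝ} (hα : 0 < α) (hβ : 0 < β)
    (hindep : iIndepFun ![W, I, J] μ)
    (hWd : μ.map W = expMeasure (α + β))
    (hId : μ.map I = expMeasure α) (hJd : μ.map J = expMeasure β) :
    μ.map (fun ω => (W ω + max (I ω - J ω) 0, W ω + max (J ω - I ω) 0, min (I ω) (J ω)))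
      = μ.map (fun ω => (I ω, J ω, W ω)) :=
  exp_triple_involution_dist_general μ hW hI hJ hα hβ hindep hWd hId hJd
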